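/- For v > 0 and a positive definite real quadratic form Q(ω₁,ω₂) = a₁ω₁² + a₂ω₁ω₂ + a₃ω₂², and for α₁, α₂ ∈ ℝ \ ℤ, the double integral ∫_{ℝ²} cot(π(iω₁+α₁)) cot(π(iω₂+α₂)) e^{-2πv Q(ω₁,ω₂)} dω₁ dω₂ converges absolutely and is real; in fact it equals ∫_{ℝ²} ( G_{α₁}(ω₁)G_{α₂}(ω₂) - F_{α₁}(ω₁)F_{α₂}(ω₂) ) e^{-2πv Q(ω)} dω₁ dω₂. -/

import Mathlib

open Real MeasureTheory Complex
open scoped ComplexConjugate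

/-! On the line `Im z = π ω` one has `cot (π (i ω + α)) = G_α ω - i F_α ω`, which follows from
`cot z = cos z · conj (sin z) / |sin z|²` and `|sin (x + i y)|² = (cosh 2y - cos 2x) / 2`. For
`α ∉ ℤ` the denominator stays `≥ 1 - cos 2πα > 0`, so the cotangents are bounded and the integrand
is dominated by the Gaussian `exp (-2πv Q)`, integrable because `Q ≥ δ |ω|²`.

Since `F_α` is odd and `G_α` even, the integrand `f` satisfies `f (-ω) = conj (f ω)`. By the
invariance of Lebesgue measure under `ω ↦ -ω` the integral equals its own conjugate, hence is the
integral of `Re f = (G_{α₁} G_{α₂} - F_{α₁} F_{α₂}) exp (-2πv Q)`. -/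

theorem Complex.cot_ofReal_add_ofReal_mul_I (x y : ℝ) :
    cot (x + y * I) =
      (Real.sin (2 * x) - Real.sinh (2 * y) * I) / (Real.cosh (2 * y) - Real.cos (2 * x)) := by
  have hnum : cos (x + y * I) * conj (sin (x + y * I)) =
      (Real.sin (2 * x) - Real.sinh (2 * y) * I) / 2 := by
    simp only [cos_add_mul_I, sin_add_mul_I, map_add, map_mul, ← sin_conj, ← cos_conj,
      ← sinh_conj, ← cosh_conj, conj_ofReal, conj_I]
    push_cast
    rw [Complex.sin_two_mul, Complex.sinh_two_mul]
    linear_combination sin ↑x * cos ↑x * sinh ↑y ^ 2 * I_sq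
      + sin ↑x * cos ↑x * cosh_sq_sub_sinh_sq (y : ℂ)
      - cosh ↑y * sinh ↑y * I * sin_sq_add_cos_sq (x : ℂ)
  have hden : normSq (sin (x + y * I)) = (Real.cosh (2 * y) - Real.cos (2 * x)) / 2 := by
    rw [sin_add_mul_I, ← ofReal_sin, ← ofReal_cos, ← ofReal_sinh, ← ofReal_cosh, ← ofReal_mul,
      ← ofReal_mul, normSq_add_mul_I, Real.cosh_two_mul, Real.cos_two_mul']
    linear_combination (Real.sin x ^ 2 - 1 / 2) * Real.cosh_sq_sub_sinh_sq y
      + (Real.sinh y ^ 2 + 1 / 2) * Real.sin_sq_add_cos_sq x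
  rw [cot, div_eq_mul_inv, inv_def, ← mul_assoc, hnum, hden]
  push_cast
  rw [inv_div]
  ring

theorem Complex.norm_cot_ofReal_add_ofReal_mul_I_le {x : ℝ} (hx : Real.cos (2 * x) < 1)
    (y : ℝ) :
    ‖cot (x + y * I)‖ ≤ 3 / (1 - Real.cos (2 * x)) := by
  have hcosh := Real.one_le_cosh (2 * y)
  have hden : 0 < Real.cosh (2 * y) - Real.cos (2 * x) := by linarith
  have hnum : ‖(Real.sin (2 * x) : ℂ) - Real.sinh (2 * y) * I‖ ≤ 1 + Real.cosh (2 * y) := by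
    refine (norm_sub_le _ _).trans (add_le_add ?_ ?_)
    · rw [norm_real, Real.norm_eq_abs]
      exact Real.abs_sin_le_one _
    · rw [norm_mul, norm_I, mul_one, norm_real, Real.norm_eq_abs, Real.abs_sinh,
        ← Real.cosh_abs (2 * y)]
      exact (Real.sinh_lt_cosh _).le
  rw [cot_ofReal_add_ofReal_mul_I, norm_div, ← ofReal_sub, norm_real, norm_of_nonneg hden.le,
    div_le_div_iff₀ hden (by linarith)]
  nlinarith [mul_le_mul_of_nonneg_right hnum (sub_nonneg.2 hx.le),
    mul_nonneg (sub_nonneg.2 hcosh)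
      (by linarith [Real.neg_one_le_cos (2 * x)] : 0 ≤ 2 + Real.cos (2 * x))]

@[fun_prop]
theorem Complex.measurable_cot : Measurable cot :=
  Complex.continuous_cos.measurable.div Complex.continuous_sin.measurable

theorem Real.cos_two_pi_mul_lt_one {α : ℝ} (hα : ∀ n : ℤ, α ≠ n) : Real.cos (2 * π * α) < 1 := by
  refine (Real.cos_le_one _).lt_of_ne fun h ↦ ?_
  obtain ⟨n, hn⟩ := (Real.cos_eq_one_iff _).1 h
  exact hα n (mul_left_cancel₀ Real.two_pi_pos.ne' (by rw [← hn]; ring))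

noncomputable def cotF (α x : ℝ) : ℝ :=
  Real.sinh (2 * π * x) / (Real.cosh (2 * π * x) - Real.cos (2 * π * α))

noncomputable def cotG (α x : ℝ) : ℝ :=
  Real.sin (2 * π * α) / (Real.cosh (2 * π * x) - Real.cos (2 * π * α))

theorem pi_mul_I_mul_add (α x : ℝ) : (π : ℂ) * (I * x + α) = ↑(π * α) + ↑(π * x) * I := by
  push_cast
  ring

theorem cot_pi_mul_I_mul_add (α x : ℝ) : cot (π * (I * x + α)) = cotG α x - cotF α x * I := by
  rw [pi_mul_I_mul_add, cot_ofReal_add_ofReal_mul_I, cotF, cotG]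
  simp only [mul_assoc]
  push_cast
  ring

theorem norm_cot_pi_mul_I_mul_add_le {α : ℝ} (hα : ∀ n : ℤ, α ≠ n) (x : ℝ) :
    ‖cot (π * (I * x + α))‖ ≤ 3 / (1 - Real.cos (2 * π * α)) := by
  have hα' : Real.cos (2 * (π * α)) < 1 := by
    rw [← mul_assoc]
    exact Real.cos_two_pi_mul_lt_one hα
  have h := norm_cot_ofReal_add_ofReal_mul_I_le hα' (π * x)
  rwa [← pi_mul_I_mul_add, ← mul_assoc] at h

theorem cot_pi_mul_I_mul_neg_add (α x : ℝ) :
    cot (π * (I * ↑(-x) + α)) = conj (cot (π * (I * x + α))) := by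
  rw [← cot_conj]
  congr 1
  simp only [map_mul, map_add, conj_ofReal, conj_I]
  push_cast
  ring

theorem exists_pos_mul_sq_add_sq_le {a₁ a₂ a₃ : ℝ} (h₁ : 0 < a₁)
    (hD : 0 < 4 * a₁ * a₃ - a₂ ^ 2) :
    ∃ δ > 0, ∀ x y : ℝ, δ * (x ^ 2 + y ^ 2) ≤ a₁ * x ^ 2 + a₂ * x * y + a₃ * y ^ 2 := by
  have h₃ : 0 < a₃ := by nlinarith [sq_nonneg a₂]
  -- for this `δ` the form `Q - δ (x² + y²)` has discriminant `-4δ² ≤ 0`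
  set δ := (4 * a₁ * a₃ - a₂ ^ 2) / (4 * (a₁ + a₃))
  have hδ' : δ * (4 * (a₁ + a₃)) = 4 * a₁ * a₃ - a₂ ^ 2 := div_mul_cancel₀ _ (by positivity)
  refine ⟨δ, by positivity, fun x y ↦ ?_⟩
  have hlt : δ < a₁ := by nlinarith [sq_nonneg a₂]
  nlinarith [sq_nonneg (2 * (a₁ - δ) * x + a₂ * y), sq_nonneg (δ * y),
    mul_pos (sub_pos.2 hlt) h₁]

theorem integrable_exp_mul_quadratic {c a₁ a₂ a₃ : ℝ} (hc : c < 0) (h₁ : 0 < a₁)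
    (hD : 0 < 4 * a₁ * a₃ - a₂ ^ 2) :
    Integrable fun ω : ℝ × ℝ ↦ Real.exp (c * (a₁ * ω.1 ^ 2 + a₂ * ω.1 * ω.2 + a₃ * ω.2 ^ 2)) := by
  obtain ⟨δ, hδ, hQ⟩ := exists_pos_mul_sq_add_sq_le h₁ hD
  have hb : 0 < -c * δ := mul_pos (neg_pos.2 hc) hδ
  refine ((integrable_exp_neg_mul_sq hb).mul_prod (integrable_exp_neg_mul_sq hb)).mono'
    (by fun_prop) (ae_of_all _ fun ω ↦ ?_)
  rw [Real.norm_of_nonneg (Real.exp_pos _).le, ← Real.exp_add, Real.exp_le_exp]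
  nlinarith [hQ ω.1 ω.2]

theorem cot_cot_integral (a₁ a₂ a₃ : ℝ) (h₁ : 0 < a₁) (hD : 0 < 4*a₁*a₃ - a₂^2)
    (v : ℝ) (hv : 0 < v) (α₁ α₂ : ℝ) (hα₁ : ∀ n : ℤ, α₁ ≠ (n : ℝ)) (hα₂ : ∀ n : ℤ, α₂ ≠ (n : ℝ)) :
    Integrable (fun ω : ℝ × ℝ =>
      Complex.cot ((π : ℂ) * (Complex.I * (ω.1 : ℂ) + (α₁ : ℂ))) *
      Complex.cot ((π : ℂ) * (Complex.I * (ω.2 : ℂ) + (α₂ : ℂ))) *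
      (Real.exp (-2*π*v * (a₁*ω.1^2 + a₂*ω.1*ω.2 + a₃*ω.2^2)) : ℂ))
    ∧ (∫ ω : ℝ × ℝ,
        Complex.cot ((π : ℂ) * (Complex.I * (ω.1 : ℂ) + (α₁ : ℂ))) *
        Complex.cot ((π : ℂ) * (Complex.I * (ω.2 : ℂ) + (α₂ : ℂ))) *
        (Real.exp (-2*π*v * (a₁*ω.1^2 + a₂*ω.1*ω.2 + a₃*ω.2^2)) : ℂ))
      = ((∫ ω : ℝ × ℝ,
          (Real.sin (2*π*α₁) / (Real.cosh (2*π*ω.1) - Real.cos (2*π*α₁)) *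
             (Real.sin (2*π*α₂) / (Real.cosh (2*π*ω.2) - Real.cos (2*π*α₂)))
           - Real.sinh (2*π*ω.1) / (Real.cosh (2*π*ω.1) - Real.cos (2*π*α₁)) *
             (Real.sinh (2*π*ω.2) / (Real.cosh (2*π*ω.2) - Real.cos (2*π*α₂)))) *
          Real.exp (-2*π*v * (a₁*ω.1^2 + a₂*ω.1*ω.2 + a₃*ω.2^2)) : ℝ) : ℂ) := by
  set f : ℝ × ℝ → ℂ := fun ω ↦ cot (π * (I * ω.1 + α₁)) * cot (π * (I * ω.2 + α₂)) *
    (Real.exp (-2*π*v * (a₁*ω.1^2 + a₂*ω.1*ω.2 + a₃*ω.2^2)) : ℂ) with hf_def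
  have hE := (integrable_exp_mul_quadratic (c := -2*π*v) (by nlinarith [Real.pi_pos]) h₁
    hD).ofReal (𝕜 := ℂ)
  have hf : Integrable f := hE.bdd_mul (by fun_prop) <| ae_of_all _ fun ω ↦ by
    rw [norm_mul]
    exact mul_le_mul (norm_cot_pi_mul_I_mul_add_le hα₁ _) (norm_cot_pi_mul_I_mul_add_le hα₂ _)
      (norm_nonneg _) (div_nonneg (by norm_num) (sub_nonneg.2 (Real.cos_le_one _)))
  refine ⟨hf, ?_⟩
  have hreal : conj (∫ ω, f ω) = ∫ ω, f ω := calc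
    conj (∫ ω, f ω) = ∫ ω, f (-ω) := by
      rw [← integral_conj]
      congr with ω
      simp only [hf_def, Prod.fst_neg, Prod.snd_neg, cot_pi_mul_I_mul_neg_add, map_mul,
        conj_ofReal]
      ring_nf
    _ = ∫ ω, f ω := integral_neg_eq_self f volume
  rw [← conj_eq_iff_re.1 hreal, ← RCLike.re_to_complex, ← integral_re hf]
  congr with ω
  simp only [hf_def, RCLike.re_to_complex, cot_pi_mul_I_mul_add, cotF, cotG, mul_re, mul_im,
    sub_re, sub_im, ofReal_re, ofReal_im, I_re, I_im]
  ring
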